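/- In PGL(3,ℂ) the following identities hold: [U₁] = [Q]², [U₂] = [R]·[Q]²·[R], and [E₁] = [P]²·([R]·[Q]²)²·[P]⁻². -/

import Mathlib

noncomputable section

open Matrix Complex

/-- GL(3,ℂ): the group of invertible 3×3 complex matrices. -/
abbrev GL3 : Type := (Matrix (Fin 3) (Fin 3) ℂ)ˣ

/-- PGL(3,ℂ): the quotient of GL(3,ℂ) by its center. -/
abbrev PGL3 : Type := GL3 ⧸ Subgroup.center GL3

/-- The projection GL(3,ℂ) → PGL(3,ℂ). -/
def pgl : GL3 →* PGL3 := QuotientGroup.mk' (Subgroup.center GL3)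

/-- The class [M] ∈ PGL(3,ℂ) of an (invertible) matrix M. -/
noncomputable def cls (M : Matrix (Fin 3) (Fin 3) ℂ) : PGL3 := by
  classical exact if h : IsUnit M then pgl h.unit else 1

/-- The Hermitian matrix of signature (2,1) defining the Siegel model. -/
def Hform : Matrix (Fin 3) (Fin 3) ℂ := !![0,0,1; 0,1,0; 1,0,0]

lemma Hform_mul_Hform : Hform * Hform = 1 := by
  rw [Hform, Matrix.mul_fin_three, Matrix.one_fin_three]
  norm_num

/-- U(2,1,O): the subgroup of GL(3,ℂ) of matrices with entries in O
satisfying Mᴴ H M = H, for O a subring of ℂ closed under conjugation. -/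
def U21 (O : Subring ℂ) (hO : ∀ z ∈ O, (starRingEnd ℂ) z ∈ O) : Subgroup GL3 where
  carrier := {M : GL3 | (∀ i j, (M : Matrix (Fin 3) (Fin 3) ℂ) i j ∈ O) ∧
      (M : Matrix (Fin 3) (Fin 3) ℂ)ᴴ * Hform * (M : Matrix (Fin 3) (Fin 3) ℂ) = Hform}
  one_mem' := by
    constructor
    · intro i j
      by_cases h : i = j <;> simp [Matrix.one_apply, h, Subring.one_mem, Subring.zero_mem]
    · simp
  mul_mem' := by
    rintro a b ⟨ha1, ha2⟩ ⟨hb1, hb2⟩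
    constructor
    · intro i j
      rw [Units.val_mul, Matrix.mul_apply]
      exact Subring.sum_mem _ fun k _ => Subring.mul_mem _ (ha1 i k) (hb1 k j)
    · rw [Units.val_mul, Matrix.conjTranspose_mul]
      calc (↑b)ᴴ * (↑a)ᴴ * Hform * ((↑a : Matrix (Fin 3) (Fin 3) ℂ) * ↑b)
          = (↑b)ᴴ * ((↑a)ᴴ * Hform * ↑a) * ↑b := by simp only [mul_assoc]
        _ = (↑b)ᴴ * Hform * ↑b := by rw [ha2]
        _ = Hform := hb2
  inv_mem' := by
    rintro a ⟨ha1, ha2⟩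
    have hBA : (Hform * (a.val)ᴴ * Hform) * a.val = 1 := by
      calc (Hform * (a.val)ᴴ * Hform) * a.val
          = Hform * ((a.val)ᴴ * Hform * a.val) := by simp only [mul_assoc]
        _ = Hform * Hform := by rw [ha2]
        _ = 1 := Hform_mul_Hform
    have hInv : (a⁻¹).val = Hform * (a.val)ᴴ * Hform :=
      Units.inv_eq_of_mul_eq_one_left hBA
    have hab : a.val * (a⁻¹).val = 1 := a.mul_inv
    constructor
    · intro i j
      rw [hInv]
      simp only [Matrix.mul_apply, Fin.sum_univ_three]
      fin_cases i <;> fin_cases j <;>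
        simp [Hform, Matrix.conjTranspose_apply, Matrix.vecHead, Matrix.vecTail, Function.comp] <;>
        exact hO _ (ha1 _ _)
    · calc ((a⁻¹).val)ᴴ * Hform * (a⁻¹).val
          = ((a⁻¹).val)ᴴ * ((a.val)ᴴ * Hform * a.val) * (a⁻¹).val := by rw [ha2]
        _ = (a.val * (a⁻¹).val)ᴴ * Hform * (a.val * (a⁻¹).val) := by
            rw [Matrix.conjTranspose_mul]; simp only [mul_assoc]
        _ = Hform := by rw [hab]; simp

/-- PU(2,1,O): the image of U(2,1,O) in PGL(3,ℂ). -/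
def PU21 (O : Subring ℂ) (hO : ∀ z ∈ O, (starRingEnd ℂ) z ∈ O) : Subgroup PGL3 :=
  (U21 O hO).map pgl

lemma conjClosed (s : Set ℂ) (h : ∀ z ∈ s, (starRingEnd ℂ) z ∈ Subring.closure s) :
    ∀ z ∈ Subring.closure s, (starRingEnd ℂ) z ∈ Subring.closure s := by
  intro z hz
  have hle : Subring.closure s ≤ (Subring.closure s).comap (starRingEnd ℂ) :=
    Subring.closure_le.mpr fun x hx => Subring.mem_comap.mpr (h x hx)
  exact Subring.mem_comap.mp (hle hz)


-- test ring pieces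
section rings
open Matrix Complex

/-- ω = (−1+i√3)/2, a primitive cube root of unity. -/
def omega3 : ℂ := (-1 + Complex.I * (Real.sqrt 3 : ℝ)) / 2

/-- O₃ = ℤ[ω], the Eisenstein integers. -/
def O3 : Subring ℂ := Subring.closure {omega3}

lemma conj_omega3 : (starRingEnd ℂ) omega3 = -1 - omega3 := by
  rw [omega3]
  rw [map_div₀, map_add, _root_.map_mul, Complex.conj_I, Complex.conj_ofReal]
  rw [map_neg, _root_.map_one, _root_.map_ofNat]
  ring

lemma hO3 : ∀ z ∈ O3, (starRingEnd ℂ) z ∈ O3 := by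
  apply conjClosed
  intro z hz
  rw [Set.mem_singleton_iff] at hz
  subst hz
  rw [conj_omega3]
  exact sub_mem (neg_mem (Subring.one_mem _)) (Subring.subset_closure rfl)

/-- O₁ = ℤ[i], the Gaussian integers. -/
def O1 : Subring ℂ := Subring.closure {Complex.I}

lemma hO1 : ∀ z ∈ O1, (starRingEnd ℂ) z ∈ O1 := by
  apply conjClosed
  intro z hz
  rw [Set.mem_singleton_iff] at hz
  subst hz
  rw [Complex.conj_I]
  exact neg_mem (Subring.subset_closure rfl)

/-- τ = (1+i√7)/2. -/
def tau7 : ℂ := (1 + Complex.I * (Real.sqrt 7 : ℝ)) / 2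

/-- O₇ = ℤ[(1+i√7)/2], the ring of integers of ℚ(i√7). -/
def O7 : Subring ℂ := Subring.closure {tau7}

lemma conj_tau7 : (starRingEnd ℂ) tau7 = 1 - tau7 := by
  rw [tau7]
  rw [map_div₀, map_add, _root_.map_mul, Complex.conj_I, Complex.conj_ofReal]
  rw [_root_.map_one, _root_.map_ofNat]
  ring

lemma hO7 : ∀ z ∈ O7, (starRingEnd ℂ) z ∈ O7 := by
  apply conjClosed
  intro z hz
  rw [Set.mem_singleton_iff] at hz
  subst hz
  rw [conj_tau7]
  exact sub_mem (Subring.one_mem _) (Subring.subset_closure rfl)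

end rings

section matrices
open Matrix Complex

/-- The Cayley transform J. -/
def Jmat : Matrix (Fin 3) (Fin 3) ℂ := !![1,1,0; 0,1,-1; 1,1,-1]

-- d = 3 ------------------------------------------------------------------
def E1d3 : Matrix (Fin 3) (Fin 3) ℂ :=
  !![omega3^2, omega3^2 - 1, omega3 + 2;
     Complex.I * (Real.sqrt 3 : ℝ), 1 + Complex.I * (Real.sqrt 3 : ℝ), omega3^2 - 1;
     Complex.I * (Real.sqrt 3 : ℝ), Complex.I * (Real.sqrt 3 : ℝ), omega3^2]

def U1d3 : Matrix (Fin 3) (Fin 3) ℂ :=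
  !![1, 0, Complex.I * (Real.sqrt 3 : ℝ); 0, 1, 0; 0, 0, 1]

def U2d3 : Matrix (Fin 3) (Fin 3) ℂ :=
  !![1, 0, 0; 0, 1, 0; Complex.I * (Real.sqrt 3 : ℝ), 0, 1]

def I1d3 : Matrix (Fin 3) (Fin 3) ℂ := Jmat⁻¹ * !![-1,0,0; 0,1,0; 0,0,-1] * Jmat

def I2d3 : Matrix (Fin 3) (Fin 3) ℂ := Jmat⁻¹ * !![1,0,0; 0,-1,0; 0,0,-1] * Jmat

/-- The Falbel–Parker generators of PU(2,1,O₃). -/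
def Pd3 : Matrix (Fin 3) (Fin 3) ℂ := !![1, 1, omega3; 0, omega3, -omega3; 0, 0, 1]

def Qd3 : Matrix (Fin 3) (Fin 3) ℂ := !![1, 1, omega3; 0, -1, 1; 0, 0, 1]

def Rd3 : Matrix (Fin 3) (Fin 3) ℂ := !![0, 0, 1; 0, -1, 0; 1, 0, 0]

/-- The hybrid H(3). -/
def H3 : Subgroup PGL3 :=
  Subgroup.closure {cls E1d3, cls U1d3, cls U2d3, cls I1d3, cls I2d3}

/-- The hybrid H̃(3). -/
def Ht3 : Subgroup PGL3 := Subgroup.closure {cls E1d3, cls U1d3, cls U2d3}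

/-- The hybrid H'(3). -/
def H'3 : Subgroup PGL3 :=
  Subgroup.closure {cls (Pd3^2 * (Rd3 * Qd3^2) * (Pd3^2)⁻¹), cls (Qd3^2), cls (Rd3 * Qd3^2 * Rd3)}

/-- The Eisenstein–Picard modular group Γ(3) = PU(2,1,O₃). -/
def Gamma3 : Subgroup PGL3 := PU21 O3 hO3

-- d = 1 ------------------------------------------------------------------
def E1d1 : Matrix (Fin 3) (Fin 3) ℂ :=
  !![Complex.I, -1 + Complex.I, 1 - Complex.I;
     -2 * Complex.I, 1 - 2 * Complex.I, -1 + Complex.I;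
     -2 * Complex.I, -2 * Complex.I, Complex.I]

def U1d1 : Matrix (Fin 3) (Fin 3) ℂ := !![1, 0, Complex.I; 0, 1, 0; 0, 0, 1]

def E2d1 : Matrix (Fin 3) (Fin 3) ℂ :=
  !![Complex.I, 2 * Complex.I, -2 * Complex.I;
     1 - Complex.I, 1 - 2 * Complex.I, 2 * Complex.I;
     1 - Complex.I, 1 - Complex.I, Complex.I]

def U2d1 : Matrix (Fin 3) (Fin 3) ℂ := !![1, 0, 0; 0, 1, 0; Complex.I, 0, 1]

/-- The Falbel–Francsics–Parker generators of PU(2,1,O₁). -/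
def I0d1 : Matrix (Fin 3) (Fin 3) ℂ := !![0, 0, 1; 0, -1, 0; 1, 0, 0]

def Qd1 : Matrix (Fin 3) (Fin 3) ℂ :=
  !![1, 1 - Complex.I, -1; 0, -1, 1 + Complex.I; 0, 0, 1]

def Td1 : Matrix (Fin 3) (Fin 3) ℂ := !![1, 0, Complex.I; 0, 1, 0; 0, 0, 1]

def R1d1 : Matrix (Fin 3) (Fin 3) ℂ := Jmat⁻¹ * !![Complex.I,0,0; 0,1,0; 0,0,1] * Jmat

def R2d1 : Matrix (Fin 3) (Fin 3) ℂ := Jmat⁻¹ * !![1,0,0; 0,Complex.I,0; 0,0,1] * Jmat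

/-- The hybrid H(1). -/
def H1 : Subgroup PGL3 := Subgroup.closure {cls E1d1, cls U1d1, cls E2d1, cls U2d1}

/-- The hybrid H'(1). -/
def H'1 : Subgroup PGL3 := Subgroup.closure {cls R1d1, cls R2d1, cls U1d1, cls U2d1}

/-- The Gauss–Picard modular group Γ(1) = PU(2,1,O₁). -/
def Gamma1 : Subgroup PGL3 := PU21 O1 hO1

-- d = 7 ------------------------------------------------------------------
def U1d7 : Matrix (Fin 3) (Fin 3) ℂ :=
  !![1, 0, Complex.I * (Real.sqrt 7 : ℝ); 0, 1, 0; 0, 0, 1]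

def U2d7 : Matrix (Fin 3) (Fin 3) ℂ :=
  !![1, 0, 0; 0, 1, 0; Complex.I * (Real.sqrt 7 : ℝ), 0, 1]

def A1d7 : Matrix (Fin 3) (Fin 3) ℂ :=
  !![-(1/2) + Complex.I * (Real.sqrt 7 : ℝ) / 2, -(3/2) + Complex.I * (Real.sqrt 7 : ℝ) / 2,
       1/2 - Complex.I * (Real.sqrt 7 : ℝ) / 2;
     1, 2, -(3/2) + Complex.I * (Real.sqrt 7 : ℝ) / 2;
     1, 1, -(1/2) + Complex.I * (Real.sqrt 7 : ℝ) / 2]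

def B1d7 : Matrix (Fin 3) (Fin 3) ℂ := !![1, 0, 0; -2, -1, 0; -2, -2, 1]

def A2d7 : Matrix (Fin 3) (Fin 3) ℂ :=
  !![-(1/2) + Complex.I * (Real.sqrt 7 : ℝ) / 2, -1, 1;
     3/2 - Complex.I * (Real.sqrt 7 : ℝ) / 2, 2, -1;
     1/2 - Complex.I * (Real.sqrt 7 : ℝ) / 2, 3/2 - Complex.I * (Real.sqrt 7 : ℝ) / 2,
       -(1/2) + Complex.I * (Real.sqrt 7 : ℝ) / 2]

def B2d7 : Matrix (Fin 3) (Fin 3) ℂ := !![1, 2, -2; 0, -1, 2; 0, 0, 1]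

/-- The Mark–Paupert generators of PU(2,1,O₇). -/
def T1d7 : Matrix (Fin 3) (Fin 3) ℂ :=
  !![1, -1, -(1/2) + Complex.I * (Real.sqrt 7 : ℝ) / 2; 0, 1, 1; 0, 0, 1]

def Rd7 : Matrix (Fin 3) (Fin 3) ℂ := !![1, 0, 0; 0, -1, 0; 0, 0, 1]

def Id7 : Matrix (Fin 3) (Fin 3) ℂ := !![0, 0, 1; 0, -1, 0; 1, 0, 0]

/-- The hybrid H(7). -/
def H7 : Subgroup PGL3 :=
  Subgroup.closure {cls U1d7, cls U2d7, cls A1d7, cls A2d7, cls B1d7, cls B2d7}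

/-- The Picard modular group Γ(7) = PU(2,1,O₇). -/
def Gamma7 : Subgroup PGL3 := PU21 O7 hO7

end matrices

section presented
/-- The relators c², a⁶, aca⁻¹c⁻¹, (ab)³, (cab)³, b² in the free group on a,b,c
(a = of 0, b = of 1, c = of 2). -/
def relsG : Set (FreeGroup (Fin 3)) :=
  {(FreeGroup.of 2)^2, (FreeGroup.of 0)^6,
   FreeGroup.of 0 * FreeGroup.of 2 * (FreeGroup.of 0)⁻¹ * (FreeGroup.of 2)⁻¹,
   (FreeGroup.of 0 * FreeGroup.of 1)^3,
   (FreeGroup.of 2 * FreeGroup.of 0 * FreeGroup.of 1)^3,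
   (FreeGroup.of 1)^2}

/-- The presented group G = ⟨a,b,c | c², a⁶, [a,c], (ab)³, (cab)³, b²⟩. -/
abbrev Gpres := PresentedGroup relsG
end presented


/-! All three identities already hold in GL(3,ℂ), with no scalar correction:
Q² = U₁, R Q² R = U₂ and E₁ P² = P² (R Q²)². Writing i√3 = 2ω + 1, every entry
becomes a polynomial in ω, and the entrywise equalities follow from ω² + ω + 1 = 0. -/

lemma I_mul_sqrt_three_eq : Complex.I * (Real.sqrt 3 : ℝ) = 2 * omega3 + 1 := by
  rw [omega3]; ring

lemma omega3_sq_add_omega3_add_one : omega3 ^ 2 + omega3 + 1 = 0 := by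
  have h3 : ((Real.sqrt 3 : ℝ) : ℂ) ^ 2 = 3 := by
    exact_mod_cast Real.sq_sqrt (show (0 : ℝ) ≤ 3 by norm_num)
  rw [omega3]
  linear_combination (((Real.sqrt 3 : ℝ) : ℂ) ^ 2 / 4) * Complex.I_sq - h3 / 4

lemma Qd3_sq : Qd3 ^ 2 = U1d3 := by
  ext i j
  fin_cases i <;> fin_cases j <;>
    simp [sq, Qd3, U1d3, Matrix.mul_apply, Fin.sum_univ_three, I_mul_sqrt_three_eq]
  ring

lemma Rd3_mul_Qd3_sq_mul_Rd3 : Rd3 * Qd3 ^ 2 * Rd3 = U2d3 := by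
  rw [Qd3_sq]
  ext i j
  fin_cases i <;> fin_cases j <;> simp [Rd3, U1d3, U2d3, Matrix.mul_apply, Fin.sum_univ_three]

lemma E1d3_mul_Pd3_sq : E1d3 * Pd3 ^ 2 = Pd3 ^ 2 * (Rd3 * Qd3 ^ 2) ^ 2 := by
  have hω := omega3_sq_add_omega3_add_one
  rw [Qd3_sq]
  ext i j
  fin_cases i <;> fin_cases j <;>
    simp [sq, E1d3, Pd3, Rd3, U1d3, Matrix.mul_apply, Fin.sum_univ_three, I_mul_sqrt_three_eq] <;>
    grind

lemma isUnit_Pd3 : IsUnit Pd3 := by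
  have hdet : Pd3.det = omega3 := by simp [Pd3, Matrix.det_fin_three]
  rw [Matrix.isUnit_iff_isUnit_det, hdet, isUnit_iff_ne_zero]
  intro h0
  simpa [h0] using omega3_sq_add_omega3_add_one

lemma isUnit_Qd3 : IsUnit Qd3 := by
  rw [Matrix.isUnit_iff_isUnit_det]
  simp [Qd3, Matrix.det_fin_three]

lemma Rd3_mul_self : Rd3 * Rd3 = 1 := by
  ext i j
  fin_cases i <;> fin_cases j <;> simp [Rd3, Matrix.mul_apply, Fin.sum_univ_three]

lemma isUnit_Rd3 : IsUnit Rd3 := .of_mul_eq_one Rd3 Rd3_mul_self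

lemma cls_coe (g : GL3) : cls g = pgl g := by
  rw [cls, dif_pos g.isUnit, g.isUnit.unit_of_val_units]

/-- [U₁] = [Q]², [U₂] = [R][Q]²[R], [E₁] = [P]²([R][Q]²)²[P]⁻². -/
theorem stmt2 :
    cls U1d3 = (cls Qd3)^2 ∧
    cls U2d3 = cls Rd3 * (cls Qd3)^2 * cls Rd3 ∧
    cls E1d3 = (cls Pd3)^2 * (cls Rd3 * (cls Qd3)^2)^2 * ((cls Pd3)^2)⁻¹ := by
  obtain ⟨p, hp⟩ := isUnit_Pd3
  obtain ⟨q, hq⟩ := isUnit_Qd3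
  obtain ⟨r, hr⟩ := isUnit_Rd3
  have hU1 : U1d3 = ↑(q ^ 2) := by simp [hq, Qd3_sq]
  have hU2 : U2d3 = ↑(r * q ^ 2 * r) := by simp [hq, hr, Rd3_mul_Qd3_sq_mul_Rd3]
  have hE1 : E1d3 = ↑(p ^ 2 * (r * q ^ 2) ^ 2 * (p ^ 2)⁻¹) := by
    rw [Units.val_mul, Units.eq_mul_inv_iff_mul_eq]
    simp [hp, hq, hr, E1d3_mul_Pd3_sq]
  rw [hU1, hU2, hE1, ← hp, ← hq, ← hr]
  simp only [cls_coe, map_mul, map_pow, map_inv, and_self]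

end
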